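/- arXiv:1705.10391 — 3 statements merged into one kernel-verified Lean document; each statement's English description precedes it below -/
import Mathlib

section
/- Let 2 ≤ a ≤ b be integers and let G be a K_{a,b}-free graph with minimum degree δ ≥ 4a−4. Then Z(G) ≥ (1/2) · (δ/(4(b−1)^{1/a}))^{a/(a−1)}. -/
namespace ZeroForcing

variable {V : Type*}

/-- The set of vertices which eventually become black in the zero forcing process on `G`
starting from the initially black set `S`. -/
inductive Forced (G : SimpleGraph V) (S : Set V) : V → Prop
  | init (v : V) (hv : v ∈ S) : Forced G S v
  | force (u w : V) (hu : Forced G S u) (hadj : G.Adj u w)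
      (hothers : ∀ x, G.Adj u x → x ≠ w → Forced G S x) : Forced G S w

/-- `S` is a zero forcing set of `G` if iterating the forcing rule makes every vertex black. -/
def IsZeroForcingSet (G : SimpleGraph V) (S : Set V) : Prop := ∀ v, Forced G S v

/-- The zero forcing number of `G`: the minimum cardinality of a zero forcing set. -/
noncomputable def zeroForcingNumber (G : SimpleGraph V) [Fintype V] : ℕ :=
  sInf {k | ∃ S : Finset V, S.card = k ∧ IsZeroForcingSet G ↑S}

/-- `G` contains a subgraph isomorphic to `H`. -/
def ContainsSubgraphCopy {W V : Type*} (H : SimpleGraph W) (G : SimpleGraph V) : Prop :=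
  ∃ f : W ↪ V, ∀ a b : W, H.Adj a b → G.Adj (f a) (f b)

/-!
Let `S` be a minimum zero forcing set, `Z = |S|`, and run the forcing process for `Z` steps.
A vertex that forces has no white neighbour afterwards, so it never forces again: the `Z`
forcing vertices are distinct and their neighbourhoods lie in the current black set, of size
`2Z`. (If fewer than `Z` vertices are white, take all `n ≤ 2Z` vertices instead.) Counting
pairs of such a vertex and an `a`-set of its neighbours, a `K_{a,b}`-free graph gives
`Z · C(δ, a) ≤ (b - 1) · C(2Z, a)`, and `δ ≤ 2(δ + 1 - a)` turns this into the bound.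
-/

open Nat in
lemma pow_le_of_mul_choose_le {a b δ u m : ℕ} (ha : 1 ≤ a) (hδ : 2 * a ≤ δ + 2) (hm : 0 < m)
    (hmu : m ≤ 2 * u) (h : u * δ.choose a ≤ (b - 1) * m.choose a) :
    δ ^ a ≤ 4 ^ a * (b - 1) * m ^ (a - 1) := by
  have hδD : δ ^ a ≤ 2 ^ a * (δ + 1 - a) ^ a := by
    rw [← mul_pow]
    exact Nat.pow_le_pow_left (by omega) a
  have hlow : (δ + 1 - a) ^ a ≤ a ! * δ.choose a := by
    rw [← descFactorial_eq_factorial_mul_choose]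
    exact pow_sub_le_descFactorial δ a
  have hup : a ! * m.choose a ≤ m ^ a := by
    rw [← descFactorial_eq_factorial_mul_choose]
    exact descFactorial_le_pow m a
  have h4 : 2 ^ (a + 1) ≤ 4 ^ a := by
    rw [show 4 = 2 ^ 2 by rfl, ← pow_mul]
    exact Nat.pow_le_pow_right two_pos (by omega)
  refine Nat.le_of_mul_le_mul_left ?_ hm
  calc m * δ ^ a ≤ 2 * u * (2 ^ a * (a ! * δ.choose a)) :=
        Nat.mul_le_mul hmu (hδD.trans (Nat.mul_le_mul_left _ hlow))
    _ = 2 ^ (a + 1) * a ! * (u * δ.choose a) := by ring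
    _ ≤ 2 ^ (a + 1) * a ! * ((b - 1) * m.choose a) := Nat.mul_le_mul_left _ h
    _ = 2 ^ (a + 1) * (b - 1) * (a ! * m.choose a) := by ring
    _ ≤ 4 ^ a * (b - 1) * m ^ a := Nat.mul_le_mul (Nat.mul_le_mul_right _ h4) hup
    _ = m * (4 ^ a * (b - 1) * m ^ (a - 1)) := by
      rw [← Nat.sub_add_cancel ha, pow_succ, Nat.add_sub_cancel]
      ring

lemma rpow_div_le_of_pow_le {a : ℕ} (ha : 2 ≤ a) {d c m : ℝ} (hd : 0 ≤ d) (hc : 0 < c)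
    (hm : 0 ≤ m) (h : d ^ a ≤ c * m ^ (a - 1)) :
    (d / c ^ (1 / (a : ℝ))) ^ ((a : ℝ) / (a - 1)) ≤ m := by
  have ha₀ : (a : ℝ) ≠ 0 := by positivity
  have hcast : ((a - 1 : ℕ) : ℝ) = a - 1 := by push_cast [Nat.cast_sub (by omega : 1 ≤ a)]; ring
  have hy : 0 ≤ d / c ^ (1 / (a : ℝ)) := by positivity
  have hya : (d / c ^ (1 / (a : ℝ))) ^ a ≤ m ^ (a - 1) := by
    rw [div_pow, ← Real.rpow_natCast (c ^ _), ← Real.rpow_mul hc.le, one_div_mul_cancel ha₀,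
      Real.rpow_one, div_le_iff₀ hc, mul_comm]
    exact h
  calc (d / c ^ (1 / (a : ℝ))) ^ ((a : ℝ) / (a - 1))
      = ((d / c ^ (1 / (a : ℝ))) ^ a) ^ ((a - 1 : ℕ) : ℝ)⁻¹ := by
        rw [← Real.rpow_natCast, ← Real.rpow_mul hy, hcast, ← div_eq_mul_inv]
    _ ≤ (m ^ (a - 1)) ^ ((a - 1 : ℕ) : ℝ)⁻¹ :=
        Real.rpow_le_rpow (by positivity) hya (by positivity)
    _ = m := Real.pow_rpow_inv_natCast hm (by omega)

open Finset

lemma exists_isZeroForcingSet_card_eq [Fintype V] (G : SimpleGraph V) :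
    ∃ S : Finset V, #S = zeroForcingNumber G ∧ IsZeroForcingSet G S :=
  Nat.sInf_mem (s := {k | ∃ S : Finset V, #S = k ∧ IsZeroForcingSet G S})
    ⟨_, univ, rfl, fun v => .init v (mem_coe.2 (mem_univ v))⟩

section

variable {G : SimpleGraph V}

lemma containsSubgraphCopy_iff_isContained {W : Type*} {H : SimpleGraph W} :
    ContainsSubgraphCopy H G ↔ H.IsContained G := by
  rw [SimpleGraph.isContained_iff_exists_le_comap]
  rfl

lemma Forced.mem_of_stalled {S B : Set V} (hSB : S ⊆ B)
    (hB : ∀ u ∈ B, ∀ w ∉ B, G.Adj u w → ∃ x, G.Adj u x ∧ x ≠ w ∧ x ∉ B)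
    {v : V} (hv : Forced G S v) : v ∈ B := by
  induction hv with
  | init v hv => exact hSB hv
  | force u w _ hadj _ hu hothers =>
    by_contra hw
    obtain ⟨x, hux, hxw, hxB⟩ := hB u hu w hw hadj
    exact hxB (hothers x hux hxw)

lemma IsZeroForcingSet.nonempty [Nonempty V] {S : Set V} (hS : IsZeroForcingSet G S) :
    S.Nonempty := by
  rw [Set.nonempty_iff_ne_empty]
  rintro rfl
  obtain ⟨v⟩ := ‹Nonempty V›
  exact (hS v).mem_of_stalled subset_rfl (by simp)

lemma IsZeroForcingSet.exists_force {S B : Set V} (hS : IsZeroForcingSet G S) (hSB : S ⊆ B)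
    (hB : B ≠ Set.univ) : ∃ u ∈ B, ∃ w ∉ B, G.Adj u w ∧ ∀ x, G.Adj u x → x ≠ w → x ∈ B := by
  by_contra! hstalled
  exact hB (Set.eq_univ_of_forall fun v => (hS v).mem_of_stalled hSB hstalled)

variable [Fintype V] [DecidableEq V]

lemma IsZeroForcingSet.exists_forcers {S : Finset V} (hS : IsZeroForcingSet G S) {k : ℕ}
    (hk : #S + k ≤ Fintype.card V) :
    ∃ B U : Finset V, S ⊆ B ∧ #B = #S + k ∧ #U = k ∧ ∀ u ∈ U, G.neighborSet u ⊆ B := by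
  induction k with
  | zero => exact ⟨S, ∅, subset_rfl, rfl, rfl, by simp⟩
  | succ k ih =>
    obtain ⟨B, U, hSB, hB, hU, hUB⟩ := ih (by omega)
    have hB_ne : (B : Set V) ≠ Set.univ := by
      rw [Ne, ← coe_univ, coe_inj]
      rintro rfl
      rw [card_univ] at hB
      omega
    obtain ⟨u, hu, w, hw, huw, hothers⟩ := hS.exists_force (coe_subset.2 hSB) hB_ne
    have huU : u ∉ U := fun h => hw (hUB u h huw)
    refine ⟨insert w B, insert u U, hSB.trans (subset_insert w B), ?_, ?_, ?_⟩
    · rw [card_insert_of_notMem (mt mem_coe.2 hw), hB, add_assoc]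
    · rw [card_insert_of_notMem huU, hU]
    · intro v hv x hx
      rw [coe_insert]
      rcases mem_insert.1 hv with rfl | hv
      · by_cases hxw : x = w
        · exact .inl hxw
        · exact .inr (hothers x hx hxw)
      · exact .inr (hUB v hv hx)

lemma IsZeroForcingSet.exists_neighborSet_subset [Nonempty V] {S : Finset V}
    (hS : IsZeroForcingSet G S) :
    ∃ U W : Finset V, 0 < #W ∧ #W ≤ 2 * #S ∧ #W ≤ 2 * #U ∧ ∀ u ∈ U, G.neighborSet u ⊆ W := by
  by_cases hn : 2 * #S ≤ Fintype.card V
  · obtain ⟨B, U, -, hB, hU, hUB⟩ := hS.exists_forcers (k := #S) (by omega)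
    have hS₀ : 0 < #S := card_pos.2 (coe_nonempty.1 hS.nonempty)
    exact ⟨U, B, by omega, by omega, by omega, hUB⟩
  · exact ⟨univ, univ, card_pos.2 univ_nonempty, by rw [card_univ]; omega, by omega,
      fun _ _ => by simp⟩

variable [DecidableRel G.Adj] {a b : ℕ}

lemma card_commonNeighbors_lt_of_Kab_free
    (hfree : ¬ ContainsSubgraphCopy (completeBipartiteGraph (Fin a) (Fin b)) G)
    (U : Finset V) {A : Finset V} (hA : #A = a) :
    #{u ∈ U | A ⊆ G.neighborFinset u} < b := by
  by_contra! hb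
  obtain ⟨B, hBU, hB⟩ := exists_subset_card_eq hb
  refine hfree (containsSubgraphCopy_iff_isContained.2
    (SimpleGraph.completeBipartiteGraph_isContained_iff.2 ⟨A, B, by simpa, by simpa, ?_⟩))
  intro x hx u hu
  have hxu := (mem_filter.1 (hBU hu)).2 hx
  exact ((G.mem_neighborFinset u x).1 hxu).symm

lemma card_mul_choose_le_of_Kab_free
    (hfree : ¬ ContainsSubgraphCopy (completeBipartiteGraph (Fin a) (Fin b)) G)
    {U W : Finset V} (hUW : ∀ u ∈ U, G.neighborSet u ⊆ W) {δ : ℕ}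
    (hδ : ∀ u ∈ U, δ ≤ G.degree u) :
    #U * δ.choose a ≤ (b - 1) * (#W).choose a := by
  rw [mul_comm _ ((#W).choose a), ← card_powersetCard]
  refine card_mul_le_card_mul (fun u A => A ⊆ G.neighborFinset u) (fun u hu => ?_)
    (fun A hA => Nat.le_sub_one_of_lt
      (card_commonNeighbors_lt_of_Kab_free hfree U (mem_powersetCard.1 hA).2))
  calc δ.choose a ≤ (G.degree u).choose a := Nat.choose_le_choose a (hδ u hu)
    _ = #((G.neighborFinset u).powersetCard a) := by
      rw [card_powersetCard, G.card_neighborFinset_eq_degree]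
    _ ≤ #((W.powersetCard a).bipartiteAbove (fun u A => A ⊆ G.neighborFinset u) u) := by
      refine card_le_card fun A hA => ?_
      obtain ⟨hAu, hA⟩ := mem_powersetCard.1 hA
      refine mem_filter.2 ⟨mem_powersetCard.2 ⟨fun x hx => ?_, hA⟩, hAu⟩
      exact hUW u hu ((G.mem_neighborFinset u x).1 (hAu hx))

end

/-- **Corollary 1**: if `2 ≤ a ≤ b` and `G` is `K_{a,b}`-free with minimum degree
`δ ≥ 4a - 4`, then `Z(G) ≥ (1/2) (δ / (4 (b-1)^(1/a)))^(a/(a-1))`. -/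
theorem zeroForcing_of_Kab_free (a b : ℕ) (ha : 2 ≤ a) (hab : a ≤ b)
    {V : Type*} [Fintype V] [Nonempty V] (G : SimpleGraph V) [DecidableRel G.Adj]
    (hfree : ¬ ContainsSubgraphCopy (completeBipartiteGraph (Fin a) (Fin b)) G)
    (hδ : 4 * a - 4 ≤ G.minDegree) :
    (1 / 2 : ℝ) * ((G.minDegree : ℝ) / (4 * ((b : ℝ) - 1) ^ (1 / (a : ℝ)))) ^ ((a : ℝ) / ((a : ℝ) - 1))
      ≤ zeroForcingNumber G := by
  classical
  obtain ⟨S, hSZ, hS⟩ := exists_isZeroForcingSet_card_eq G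
  obtain ⟨U, W, hW, hWS, hWU, hUW⟩ := hS.exists_neighborSet_subset
  have hcount := card_mul_choose_le_of_Kab_free hfree hUW fun u _ => G.minDegree_le_degree u
  have hpow := pow_le_of_mul_choose_le (by omega) (by omega) hW hWU hcount
  have hb : (1 : ℝ) ≤ b - 1 := by
    have : (2 : ℝ) ≤ b := by exact_mod_cast ha.trans hab
    linarith
  have hpowR : ((G.minDegree : ℝ) / 4) ^ a ≤ ((b : ℝ) - 1) * (#W : ℝ) ^ (a - 1) := by
    rw [div_pow, div_le_iff₀ (by positivity)]
    have := (Nat.cast_le (α := ℝ)).2 hpow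
    push_cast [Nat.cast_sub (by omega : 1 ≤ b)] at this
    linarith
  have hbound := rpow_div_le_of_pow_le ha (by positivity) (by linarith) (by positivity) hpowR
  rw [div_div] at hbound
  have hWZ : (#W : ℝ) ≤ 2 * zeroForcingNumber G := by rw [← hSZ]; exact_mod_cast hWS
  linarith

end ZeroForcing
end

section
/- Let G be an n-vertex graph with Z(G) ≤ n − k. Then G contains a k-witness. -/
namespace ZeroForcing

variable {V : Type*}

/-- A `k`-witness in `G`: tuples `s`, `t` with the `s i` pairwise distinct,
`s i` adjacent to `t i`, and `s i` not adjacent to `t j` for `i < j`. -/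
def IsWitness {V : Type*} {k : ℕ} (G : SimpleGraph V) (s t : Fin k → V) : Prop :=
  Function.Injective s ∧ (∀ i, G.Adj (s i) (t i)) ∧
    ∀ i j : Fin k, i < j → ¬ G.Adj (s i) (t j)

variable {G : SimpleGraph V}

theorem Forced.mono {S T : Set V} (h : S ⊆ T) {v : V} (hv : Forced G S v) : Forced G T v := by
  induction hv with
  | init v hv => exact .init v (h hv)
  | force u w _ hadj _ ihu ihothers => exact .force u w ihu hadj ihothers

theorem IsZeroForcingSet.mono {S T : Set V} (hS : IsZeroForcingSet G S) (h : S ⊆ T) :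
    IsZeroForcingSet G T :=
  fun v => (hS v).mono h

theorem Forced.exists_force_of_notMem {S : Set V} {v : V} (hv : Forced G S v) (hvS : v ∉ S) :
    ∃ u w, u ∈ S ∧ w ∉ S ∧ G.Adj u w ∧ ∀ x, G.Adj u x → x ≠ w → x ∈ S := by
  induction hv with
  | init v hv => exact absurd hv hvS
  | force u w _ hadj _ ihu ihothers =>
    by_cases huS : u ∈ S
    · by_cases hall : ∀ x, G.Adj u x → x ≠ w → x ∈ S
      · exact ⟨u, w, huS, hvS, hadj, hall⟩
      · push Not at hall
        obtain ⟨x, hx, hxw, hxS⟩ := hall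
        exact ihothers x hx hxw hxS
    · exact ihu huS

theorem exists_isZeroForcingSet_card_eq_zeroForcingNumber [Fintype V] :
    ∃ S : Finset V, S.card = zeroForcingNumber G ∧ IsZeroForcingSet G ↑S :=
  Nat.sInf_mem (s := {k | ∃ S : Finset V, S.card = k ∧ IsZeroForcingSet G ↑S})
    ⟨_, Finset.univ, rfl, fun v => .init v (by simp)⟩

theorem isWitness_of_adj {k : ℕ} {s t : Fin k → V} (hadj : ∀ i, G.Adj (s i) (t i))
    (hnadj : ∀ i j, i < j → ¬ G.Adj (s i) (t j)) : IsWitness G s t := by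
  refine ⟨fun i j hij => ?_, hadj, hnadj⟩
  by_contra hne
  rcases Ne.lt_or_gt hne with h | h
  · exact hnadj i j h (hij ▸ hadj j)
  · exact hnadj j i h (hij ▸ hadj i)

theorem IsWitness.cons {k : ℕ} {s t : Fin k → V} {u w : V} (h : IsWitness G s t)
    (huw : G.Adj u w) (hu : ∀ j, ¬ G.Adj u (t j)) :
    IsWitness G (Fin.cons u s : Fin (k + 1) → V) (Fin.cons w t) := by
  refine isWitness_of_adj (Fin.cases huw h.2.1) fun i j hij => ?_
  induction j using Fin.cases with
  | zero => exact absurd hij (Fin.not_lt_zero i)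
  | succ j =>
    induction i using Fin.cases with
    | zero => exact hu j
    | succ i => exact h.2.2 i j (Fin.succ_lt_succ_iff.mp hij)

/-- The forces `u ↦ w` performed one after another from `S` form a witness: when `u` forces `w`,
every later forced vertex is still white, hence not a neighbour of `u`. -/
theorem IsZeroForcingSet.exists_witness [Fintype V] [DecidableEq V] {S : Finset V}
    (hS : IsZeroForcingSet G ↑S) {k : ℕ} (hk : S.card + k ≤ Fintype.card V) :
    ∃ s t : Fin k → V, IsWitness G s t ∧ ∀ i, t i ∉ S := by
  induction k generalizing S with
  | zero => exact ⟨Fin.elim0, Fin.elim0, isWitness_of_adj nofun nofun, nofun⟩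
  | succ k ih =>
    obtain ⟨v, -, hv⟩ := Finset.exists_mem_notMem_of_card_lt_card
      (s := S) (t := Finset.univ) (by rw [Finset.card_univ]; omega)
    obtain ⟨u, w, -, hw, huw, hu⟩ := (hS v).exists_force_of_notMem (Finset.mem_coe.not.mpr hv)
    have hw : w ∉ S := Finset.mem_coe.not.mp hw
    obtain ⟨s, t, hst, ht⟩ := ih (S := insert w S)
      (hS.mono (by simp)) (by rw [Finset.card_insert_of_notMem hw]; omega)
    have ht' : ∀ j, t j ≠ w ∧ t j ∉ S := fun j => by simpa only [Finset.mem_insert, not_or] using ht j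
    refine ⟨_, _, hst.cons huw fun j hadj => (ht' j).2 (hu _ hadj (ht' j).1), ?_⟩
    exact Fin.cases hw fun j => (ht' j).2

/-- **Lemma 1 (first part)**: if `G` has `n` vertices and `Z(G) ≤ n - k`, then `G`
contains a `k`-witness. -/
theorem exists_witness_of_zeroForcing {V : Type*} [Fintype V] (G : SimpleGraph V)
    (n k : ℕ) (hn : Fintype.card V = n)
    (hZ : (zeroForcingNumber G : ℤ) ≤ (n : ℤ) - (k : ℤ)) :
    ∃ s t : Fin k → V, IsWitness G s t := by
  classical
  obtain ⟨S, hS, hSzf⟩ := exists_isZeroForcingSet_card_eq_zeroForcingNumber (G := G)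
  obtain ⟨s, t, hst, -⟩ := hSzf.exists_witness (k := k) (by omega)
  exact ⟨s, t, hst⟩

end ZeroForcing
end

section
/- Let k be a positive integer and let A, B ⊆ [k] with |A| = a, |B| = b and |A ∩ B| = g. Then |{(i,j) ∈ A × B : i < j}| ≤ ab − g(g+1)/2. Consequently, Φ(a,b) ≤ ab − (a+b−k+1)(a+b−k)/2 whenever a + b ≥ k. -/
/-! The pairs `(i, j) ∈ A × B` with `i < j` are disjoint from the `g(g+1)/2` pairs
`(i, j) ∈ (A ∩ B)²` with `j ≤ i`, and both sets lie in `A × B`. For `A, B ⊆ [k]` we have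
`g ≥ a + b - k`, and `Φ(a, b)`, the supremum of a bounded set of naturals, is attained. -/

namespace ZeroForcing

/-- The number of pairs `(i, j) ∈ A × B` with `i < j`. -/
def pairCount (A B : Finset ℕ) : ℕ := ((A ×ˢ B).filter fun p => p.1 < p.2).card

/-- `Φ(a, b)`: the maximum of `|{(i,j) ∈ A × B : i < j}|` over subsets
`A, B ⊆ [k] = {1,…,k}` with `|A| = a` and `|B| = b`. -/
noncomputable def Phi (k a b : ℕ) : ℕ :=
  sSup {c | ∃ A B : Finset ℕ, A ⊆ Finset.Icc 1 k ∧ B ⊆ Finset.Icc 1 k ∧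
    A.card = a ∧ B.card = b ∧ c = pairCount A B}

open Finset

/- The pairs `j ≤ i` and the pairs `i ≤ j` of `S × S` are swapped by `Prod.swap`,
cover `S × S` and meet in the diagonal. -/
theorem two_mul_card_filter_snd_le_fst {α : Type*} [LinearOrder α] (S : Finset α) :
    2 * #{p ∈ S ×ˢ S | p.2 ≤ p.1} = #S * (#S + 1) := by
  set L := {p ∈ S ×ˢ S | p.2 ≤ p.1}
  set U := {p ∈ S ×ˢ S | p.1 ≤ p.2}
  have h_union : L ∪ U = S ×ˢ S := by
    ext p
    simp only [L, U, ← filter_or, mem_filter, le_total, and_true]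
  have h_inter : L ∩ U = S.diag := by
    ext p
    simp only [L, U, ← filter_and, mem_filter, mem_diag, mem_product, ← le_antisymm_iff]
    grind
  have h_swap : #U = #L :=
    card_nbij' Prod.swap Prod.swap (fun _ _ => by simp_all [U, L])
      (fun _ _ => by simp_all [U, L]) (fun _ _ => rfl) (fun _ _ => rfl)
  have h := card_union_add_card_inter L U
  rw [h_union, h_inter, card_product, diag_card, h_swap] at h
  linarith

theorem two_mul_pairCount_add_le (A B : Finset ℕ) :
    2 * pairCount A B + #(A ∩ B) * (#(A ∩ B) + 1) ≤ 2 * (#A * #B) := by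
  set G := A ∩ B
  have h_sub : {p ∈ A ×ˢ B | p.1 < p.2} ∪ {p ∈ G ×ˢ G | p.2 ≤ p.1} ⊆ A ×ˢ B := by
    refine union_subset (filter_subset _ _) fun p hp => ?_
    simp only [G, mem_filter, mem_product, mem_inter] at hp ⊢
    exact ⟨hp.1.1.1, hp.1.2.2⟩
  have h_disj : Disjoint {p ∈ A ×ˢ B | p.1 < p.2} {p ∈ G ×ˢ G | p.2 ≤ p.1} :=
    disjoint_filter_filter' _ _ fun q hlt hle p hp => not_lt_of_ge (hle p hp) (hlt p hp)
  have h := card_le_card h_sub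
  rw [card_union_of_disjoint h_disj, card_product] at h
  have h_tri := two_mul_card_filter_snd_le_fst G
  unfold pairCount
  omega

theorem pairCount_le_mul_sub (A B : Finset ℕ) :
    (pairCount A B : ℤ) ≤ #A * #B - #(A ∩ B) * (#(A ∩ B) + 1) / 2 := by
  have h : 2 * (pairCount A B : ℤ) + #(A ∩ B) * (#(A ∩ B) + 1) ≤ 2 * (#A * #B) := by
    exact_mod_cast two_mul_pairCount_add_le A B
  generalize (#A : ℤ) * #B = n at h ⊢
  generalize ((#(A ∩ B) : ℕ) : ℤ) * (#(A ∩ B) + 1) = m at h ⊢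
  omega

theorem card_add_card_le_card_add_card_inter {α : Type*} [DecidableEq α] {A B U : Finset α}
    (hA : A ⊆ U) (hB : B ⊆ U) : #A + #B ≤ #U + #(A ∩ B) := by
  rw [← card_union_add_card_inter]
  exact Nat.add_le_add_right (card_le_card (union_subset hA hB)) _

theorem pairCount_le_of_subset_Icc {k : ℕ} {A B : Finset ℕ}
    (hA : A ⊆ Icc 1 k) (hB : B ⊆ Icc 1 k) (hk : k ≤ #A + #B) :
    (pairCount A B : ℤ) ≤
      (#A : ℤ) * #B - ((#A : ℤ) + #B - k + 1) * ((#A : ℤ) + #B - k) / 2 := by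
  have h_inter := card_add_card_le_card_add_card_inter hA hB
  rw [Nat.card_Icc, Nat.add_sub_cancel] at h_inter
  set s : ℤ := (#A : ℤ) + #B - k
  have hs : 0 ≤ s := by omega
  have hsg : s ≤ #(A ∩ B) := by omega
  have h_tri : (s + 1) * s / 2 ≤ #(A ∩ B) * ((#(A ∩ B) : ℤ) + 1) / 2 :=
    Int.ediv_le_ediv two_pos (by nlinarith)
  linarith [pairCount_le_mul_sub A B]

theorem pairCount_le_mul {A B : Finset ℕ} : pairCount A B ≤ #A * #B :=
  (card_filter_le _ _).trans_eq (card_product A B)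

theorem exists_pairCount_eq_Phi {k : ℕ} {A B : Finset ℕ}
    (hA : A ⊆ Icc 1 k) (hB : B ⊆ Icc 1 k) :
    ∃ A' B' : Finset ℕ, A' ⊆ Icc 1 k ∧ B' ⊆ Icc 1 k ∧ #A' = #A ∧ #B' = #B ∧
      Phi k #A #B = pairCount A' B' := by
  refine Nat.sSup_mem (s := {c | ∃ A' B' : Finset ℕ, A' ⊆ Icc 1 k ∧ B' ⊆ Icc 1 k ∧
    #A' = #A ∧ #B' = #B ∧ c = pairCount A' B'})
    ⟨_, A, B, hA, hB, rfl, rfl, rfl⟩ ⟨#A * #B, ?_⟩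
  rintro _ ⟨A', B', -, -, hA', hB', rfl⟩
  exact hA' ▸ hB' ▸ pairCount_le_mul

theorem pairCount_le_and_phi_le_general (k : ℕ) (A B : Finset ℕ)
    (hA : A ⊆ Finset.Icc 1 k) (hB : B ⊆ Finset.Icc 1 k)
    (a b g : ℕ) (ha : A.card = a) (hb : B.card = b) (hg : (A ∩ B).card = g) :
    (pairCount A B : ℤ) ≤ (a : ℤ) * b - g * (g + 1) / 2 ∧
      (k ≤ a + b →
        (Phi k a b : ℤ) ≤ (a : ℤ) * b - ((a : ℤ) + b - k + 1) * ((a : ℤ) + b - k) / 2) := by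
  subst ha hb hg
  refine ⟨pairCount_le_mul_sub A B, fun hk => ?_⟩
  obtain ⟨A', B', hA', hB', hcA, hcB, hPhi⟩ := exists_pairCount_eq_Phi hA hB
  rw [hPhi, ← hcA, ← hcB]
  exact pairCount_le_of_subset_Icc hA' hB' (hcA ▸ hcB ▸ hk)

/-- For `A, B ⊆ [k]` with `|A| = a`, `|B| = b`, `|A ∩ B| = g`, the number of pairs
`(i,j) ∈ A × B` with `i < j` is at most `ab - g(g+1)/2`; consequently, if `a + b ≥ k`
then `Φ(a,b) ≤ ab - (a+b-k+1)(a+b-k)/2`. -/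
theorem pairCount_le_and_phi_le (k : ℕ) (hk : 0 < k) (A B : Finset ℕ)
    (hA : A ⊆ Finset.Icc 1 k) (hB : B ⊆ Finset.Icc 1 k)
    (a b g : ℕ) (ha : A.card = a) (hb : B.card = b) (hg : (A ∩ B).card = g) :
    (pairCount A B : ℤ) ≤ (a : ℤ) * b - g * (g + 1) / 2 ∧
      (k ≤ a + b →
        (Phi k a b : ℤ) ≤ (a : ℤ) * b - ((a : ℤ) + b - k + 1) * ((a : ℤ) + b - k) / 2) :=
  pairCount_le_and_phi_le_general k A B hA hB a b g ha hb hg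

end ZeroForcing
end
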